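/- arXiv:2310.15457 — 4 statements merged into one kernel-verified Lean document; each statement's English description precedes it below -/
import Mathlib

section
/- Let H be a real inner product space, N ≥ 1, α : Fin N → ℝ with m := Σ_{i=1}^N α_i² > 0, and let δ > 0, λ > 0. Let p : Fin N → H and let a ≥ 0 be a real number. Write x := ‖Σ_{i=1}^N α_i • p_i‖. If δ · Σ_{i=1}^N ‖p_i‖² + x²/λ ≤ (a/λ) · x, then x ≤ (m/λ)/(δ + m/λ) · a = (m/(λδ + m)) · a. -/
open Finset

/-! Cauchy–Schwarz gives `x² ≤ m Σ ‖p i‖²`; feeding this into `m` times the hypothesis leaves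
the quadratic inequality `x² (δ + m/λ) ≤ (m/λ) a x` in `x` alone, which is solved by dividing by `x`. -/

theorem norm_sum_smul_sq_le {ι E : Type*} [SeminormedAddCommGroup E] [NormedSpace ℝ E]
    (s : Finset ι) (α : ι → ℝ) (p : ι → E) :
    ‖∑ i ∈ s, α i • p i‖ ^ 2 ≤ (∑ i ∈ s, α i ^ 2) * ∑ i ∈ s, ‖p i‖ ^ 2 := by
  have htri : ‖∑ i ∈ s, α i • p i‖ ≤ ∑ i ∈ s, |α i| * ‖p i‖ :=
    (norm_sum_le _ _).trans_eq <| sum_congr rfl fun i _ => by rw [norm_smul, Real.norm_eq_abs]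
  calc ‖∑ i ∈ s, α i • p i‖ ^ 2 ≤ (∑ i ∈ s, |α i| * ‖p i‖) ^ 2 :=
        pow_le_pow_left₀ (norm_nonneg _) htri 2
    _ ≤ (∑ i ∈ s, |α i| ^ 2) * ∑ i ∈ s, ‖p i‖ ^ 2 := sum_mul_sq_le_sq_mul_sq _ _ _
    _ = (∑ i ∈ s, α i ^ 2) * ∑ i ∈ s, ‖p i‖ ^ 2 := by simp only [sq_abs]

theorem le_div_of_sq_mul_le {x b c : ℝ} (hx : 0 ≤ x) (hb : 0 < b) (hc : 0 ≤ c)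
    (h : x ^ 2 * b ≤ c * x) : x ≤ c / b := by
  rcases hx.eq_or_lt with rfl | hx_pos
  · positivity
  · rw [le_div_iff₀ hb]
    nlinarith

theorem contraction_estimate_total_pressure_general
    {H : Type*} [NormedAddCommGroup H] [InnerProductSpace ℝ H]
    (N : ℕ) (α : Fin N → ℝ)
    (m : ℝ) (hm : m = ∑ i : Fin N, (α i) ^ 2)
    (δ lam : ℝ) (hδ : 0 < δ) (hlam : 0 < lam)
    (p : Fin N → H) (a : ℝ) (ha : 0 ≤ a)
    (x : ℝ) (hx : x = ‖∑ i : Fin N, α i • p i‖)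
    (hineq : δ * (∑ i : Fin N, ‖p i‖ ^ 2) + x ^ 2 / lam ≤ (a / lam) * x) :
    x ≤ (m / lam) / (δ + m / lam) * a := by
  set S := ∑ i : Fin N, ‖p i‖ ^ 2
  have hm_nonneg : 0 ≤ m := hm ▸ sum_nonneg fun i _ => sq_nonneg (α i)
  have hcs : x ^ 2 ≤ m * S := hx ▸ hm ▸ norm_sum_smul_sq_le univ α p
  have hquad : x ^ 2 * (δ + m / lam) ≤ (m / lam * a) * x := by
    have hineq_m := mul_le_mul_of_nonneg_left hineq hm_nonneg
    have hcs_δ := mul_le_mul_of_nonneg_left hcs hδ.le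
    calc x ^ 2 * (δ + m / lam) = δ * x ^ 2 + m * (x ^ 2 / lam) := by ring
      _ ≤ m * (δ * S + x ^ 2 / lam) := by linarith
      _ ≤ m * (a / lam * x) := hineq_m
      _ = (m / lam * a) * x := by ring
  rw [div_mul_eq_mul_div]
  exact le_div_of_sq_mul_le (hx ▸ norm_nonneg _) (by positivity) (by positivity) hquad

/-- The key contraction estimate (4.9) in the convergence proof of the
iteratively decoupled algorithm (Theorem 4.1): writing
`x = ‖Σ α_i • p_i‖`, the inequality
`δ Σ ‖p_i‖² + x²/λ ≤ (a/λ) x` implies `x ≤ (m/(λδ + m)) a` where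
`m = Σ α_i²`. -/
theorem contraction_estimate_total_pressure
    {H : Type*} [NormedAddCommGroup H] [InnerProductSpace ℝ H]
    (N : ℕ) (hN : 1 ≤ N) (α : Fin N → ℝ)
    (m : ℝ) (hm : m = ∑ i : Fin N, (α i) ^ 2) (hm_pos : 0 < m)
    (δ lam : ℝ) (hδ : 0 < δ) (hlam : 0 < lam)
    (p : Fin N → H) (a : ℝ) (ha : 0 ≤ a)
    (x : ℝ) (hx : x = ‖∑ i : Fin N, α i • p i‖)
    (hineq : δ * (∑ i : Fin N, ‖p i‖ ^ 2) + x ^ 2 / lam ≤ (a / lam) * x) :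
    x ≤ (m / lam) / (δ + m / lam) * a :=
  contraction_estimate_total_pressure_general N α m hm δ lam hδ hlam p a ha x hx hineq
end

section
/- Let H be a real inner product space, N ≥ 1, α : Fin N → ℝ with m := Σ_{i=1}^N α_i² > 0, and let δ > 0, λ > 0. Let p : Fin N → H and let a ≥ 0 be a real number. Write x := ‖Σ_{i=1}^N α_i • p_i‖. If δ · Σ_{i=1}^N ‖p_i‖² + x²/λ ≤ (a/λ) · x, then (Σ_{i=1}^N ‖p_i‖²)^{1/2} ≤ (m/(λδ(λδ + m)))^{1/2} · a. -/
open Finset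

/-- Eliminating `x` between `x² ≤ m S` and `c S + x² ≤ a x`: first `(c + m) x ≤ m a`,
then `c S ≤ a x`. -/
theorem mul_mul_le_mul_sq_of_sq_le_of_add_sq_le {c m S x a : ℝ} (hc : 0 ≤ c) (hm : 0 ≤ m)
    (hx : 0 ≤ x) (ha : 0 ≤ a) (hCS : x ^ 2 ≤ m * S) (h : c * S + x ^ 2 ≤ a * x) :
    c * (c + m) * S ≤ m * a ^ 2 := by
  have hx_le : (c + m) * x ≤ m * a := by
    rcases hx.eq_or_lt with rfl | hx_pos
    · simpa using mul_nonneg hm ha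
    refine le_of_mul_le_mul_right ?_ hx_pos
    calc (c + m) * x * x = c * x ^ 2 + m * x ^ 2 := by ring
      _ ≤ c * (m * S) + m * x ^ 2 := by gcongr
      _ = m * (c * S + x ^ 2) := by ring
      _ ≤ m * (a * x) := by gcongr
      _ = m * a * x := by ring
  have hcS : c * S ≤ a * x := by nlinarith [sq_nonneg x]
  calc c * (c + m) * S = (c + m) * (c * S) := by ring
    _ ≤ (c + m) * (a * x) := by gcongr
    _ = a * ((c + m) * x) := by ring
    _ ≤ a * (m * a) := by gcongr
    _ = m * a ^ 2 := by ring

theorem sqrt_le_sqrt_mul_of_le_mul_sq {S k a : ℝ} (ha : 0 ≤ a) (h : S ≤ k * a ^ 2) :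
    √S ≤ √k * a :=
  (Real.sqrt_le_sqrt h).trans_eq (by rw [Real.sqrt_mul' k (sq_nonneg a), Real.sqrt_sq ha])

theorem pressure_error_l2_estimate_general
    {H : Type*} [NormedAddCommGroup H] [InnerProductSpace ℝ H]
    (N : ℕ) (α : Fin N → ℝ)
    (m : ℝ) (hm : m = ∑ i : Fin N, (α i) ^ 2)
    (δ lam : ℝ) (hδ : 0 < δ) (hlam : 0 < lam)
    (p : Fin N → H) (a : ℝ) (ha : 0 ≤ a)
    (x : ℝ) (hx : x = ‖∑ i : Fin N, α i • p i‖)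
    (hineq : δ * (∑ i : Fin N, ‖p i‖ ^ 2) + x ^ 2 / lam ≤ (a / lam) * x) :
    Real.sqrt (∑ i : Fin N, ‖p i‖ ^ 2) ≤
      Real.sqrt (m / (lam * δ * (lam * δ + m))) * a := by
  set S := ∑ i : Fin N, ‖p i‖ ^ 2
  have hm0 : 0 ≤ m := hm ▸ sum_nonneg fun i _ => sq_nonneg (α i)
  have hCS : x ^ 2 ≤ m * S := hx ▸ hm ▸ norm_sum_smul_sq_le univ α p
  have hlin : lam * δ * S + x ^ 2 ≤ a * x := by
    have := mul_le_mul_of_nonneg_left hineq hlam.le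
    field_simp at this
    linarith
  have hkey := mul_mul_le_mul_sq_of_sq_le_of_add_sq_le (by positivity) hm0
    (hx ▸ norm_nonneg _) ha hCS hlin
  refine sqrt_le_sqrt_mul_of_le_mul_sq ha ?_
  rw [div_mul_eq_mul_div, le_div_iff₀ (by positivity)]
  linarith

/-- Estimate (4.13) in the convergence proof of the iteratively decoupled
algorithm (Theorem 4.1): writing `x = ‖Σ α_i • p_i‖`, the inequality
`δ Σ ‖p_i‖² + x²/λ ≤ (a/λ) x` implies
`(Σ ‖p_i‖²)^{1/2} ≤ (m/(λδ(λδ + m)))^{1/2} a` where `m = Σ α_i²`. -/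
theorem pressure_error_l2_estimate
    {H : Type*} [NormedAddCommGroup H] [InnerProductSpace ℝ H]
    (N : ℕ) (hN : 1 ≤ N) (α : Fin N → ℝ)
    (m : ℝ) (hm : m = ∑ i : Fin N, (α i) ^ 2) (hm_pos : 0 < m)
    (δ lam : ℝ) (hδ : 0 < δ) (hlam : 0 < lam)
    (p : Fin N → H) (a : ℝ) (ha : 0 ≤ a)
    (x : ℝ) (hx : x = ‖∑ i : Fin N, α i • p i‖)
    (hineq : δ * (∑ i : Fin N, ‖p i‖ ^ 2) + x ^ 2 / lam ≤ (a / lam) * x) :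
    Real.sqrt (∑ i : Fin N, ‖p i‖ ^ 2) ≤
      Real.sqrt (m / (lam * δ * (lam * δ + m))) * a :=
  pressure_error_l2_estimate_general N α m hm δ lam hδ hlam p a ha x hx hineq
end

section
/- Let H be a real inner product space, N ≥ 1, α : Fin N → ℝ with m := Σ_{i=1}^N α_i² > 0, and let δ > 0, λ > 0, Δt > 0, ζ > 0. Let p : Fin N → H, and let a ≥ 0 and g ≥ 0 be real numbers. Write x := ‖Σ_{i=1}^N α_i • p_i‖. If δ · Σ_{i=1}^N ‖p_i‖² + x²/λ ≤ (a/λ) · x and Δt · ζ · g² ≤ (a/λ) · x, then g ≤ ((m/λ)/((λδ + m) · Δt · ζ))^{1/2} · a. -/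
open Finset

theorem mul_add_le_of_energy_le {x m S δ lam a : ℝ} (hx : 0 ≤ x) (ha : 0 ≤ a) (hm : 0 ≤ m)
    (hδ : 0 ≤ δ) (hlam : 0 < lam) (hxS : x ^ 2 ≤ m * S) (h : δ * S + x ^ 2 / lam ≤ a / lam * x) :
    x * (lam * δ + m) ≤ a * m := by
  have h' : lam * δ * S + x ^ 2 ≤ a * x := by
    have := mul_le_mul_of_nonneg_left h hlam.le
    field_simp at this
    linarith
  have hsq : x * (x * (lam * δ + m)) ≤ x * (a * m) := by
    nlinarith [mul_le_mul_of_nonneg_left hxS (mul_nonneg hlam.le hδ),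
      mul_le_mul_of_nonneg_left h' hm]
  rcases hx.eq_or_lt with rfl | hx_pos
  · simpa using mul_nonneg ha hm
  · exact le_of_mul_le_mul_left hsq hx_pos

theorem pressure_gradient_estimate_general
    {H : Type*} [NormedAddCommGroup H] [InnerProductSpace ℝ H]
    (N : ℕ) (α : Fin N → ℝ)
    (m : ℝ) (hm : m = ∑ i : Fin N, (α i) ^ 2)
    (δ lam Δt ζ : ℝ) (hδ : 0 < δ) (hlam : 0 < lam) (hΔt : 0 < Δt) (hζ : 0 < ζ)
    (p : Fin N → H) (a g : ℝ) (ha : 0 ≤ a)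
    (x : ℝ) (hx : x = ‖∑ i : Fin N, α i • p i‖)
    (hineq1 : δ * (∑ i : Fin N, ‖p i‖ ^ 2) + x ^ 2 / lam ≤ (a / lam) * x)
    (hineq2 : Δt * ζ * g ^ 2 ≤ (a / lam) * x) :
    g ≤ Real.sqrt ((m / lam) / ((lam * δ + m) * Δt * ζ)) * a := by
  have hm_nonneg : 0 ≤ m := hm ▸ by positivity
  have hx_nonneg : 0 ≤ x := hx ▸ norm_nonneg _
  have hxS : x ^ 2 ≤ m * ∑ i : Fin N, ‖p i‖ ^ 2 := hx ▸ hm ▸ norm_sum_smul_sq_le _ α p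
  have hx_le := mul_add_le_of_energy_le hx_nonneg ha hm_nonneg hδ.le hlam hxS hineq1
  have hg_sq : g ^ 2 ≤ (m / lam) / ((lam * δ + m) * Δt * ζ) * a ^ 2 := by
    have hden : 0 < lam * ((lam * δ + m) * Δt * ζ) := by positivity
    rw [div_div, div_mul_eq_mul_div, le_div_iff₀ hden]
    have := mul_le_mul_of_nonneg_left hineq2 hlam.le
    field_simp at this
    nlinarith [mul_le_mul_of_nonneg_left hx_le ha,
      mul_le_mul_of_nonneg_right this (by positivity : 0 ≤ lam * δ + m)]
  calc g ≤ |g| := le_abs_self g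
    _ ≤ √((m / lam) / ((lam * δ + m) * Δt * ζ) * a ^ 2) := Real.abs_le_sqrt hg_sq
    _ = √((m / lam) / ((lam * δ + m) * Δt * ζ)) * a := by
      rw [Real.sqrt_mul (by positivity), Real.sqrt_sq ha]

/-- The pressure-gradient estimate (4.14) in the convergence proof of the
iteratively decoupled algorithm (Theorem 4.1): writing `x = ‖Σ α_i • p_i‖`,
the two inequalities `δ Σ ‖p_i‖² + x²/λ ≤ (a/λ) x` and `Δt ζ g² ≤ (a/λ) x`
imply `g ≤ ((m/λ)/((λδ + m) Δt ζ))^{1/2} a`, where `m = Σ α_i²`. -/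
theorem pressure_gradient_estimate
    {H : Type*} [NormedAddCommGroup H] [InnerProductSpace ℝ H]
    (N : ℕ) (hN : 1 ≤ N) (α : Fin N → ℝ)
    (m : ℝ) (hm : m = ∑ i : Fin N, (α i) ^ 2) (hm_pos : 0 < m)
    (δ lam Δt ζ : ℝ) (hδ : 0 < δ) (hlam : 0 < lam) (hΔt : 0 < Δt) (hζ : 0 < ζ)
    (p : Fin N → H) (a g : ℝ) (ha : 0 ≤ a) (hg : 0 ≤ g)
    (x : ℝ) (hx : x = ‖∑ i : Fin N, α i • p i‖)
    (hineq1 : δ * (∑ i : Fin N, ‖p i‖ ^ 2) + x ^ 2 / lam ≤ (a / lam) * x)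
    (hineq2 : Δt * ζ * g ^ 2 ≤ (a / lam) * x) :
    g ≤ Real.sqrt ((m / lam) / ((lam * δ + m) * Δt * ζ)) * a :=
  pressure_gradient_estimate_general N α m hm δ lam Δt ζ hδ hlam hΔt hζ p a g ha x hx hineq1 hineq2
end

section
/- Let λ > 0, μ > 0, C > 0, and let a : ℕ → ℝ and b : ℕ → ℝ be sequences of nonnegative reals such that for every k ≥ 1: (i) 2μ · b_k² + a_k²/λ ≤ (a_{k−1} · a_k)/λ, and (ii) a_k ≤ C · b_k. Then a_k → 0 and b_k → 0 as k → ∞. (In particular, (i) alone implies that the sequence (a_k) is nonincreasing.) -/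
open Filter Topology

/-!
Condition (i) says `2μλ b_k² ≤ a_k (a_{k-1} - a_k)`, so `(a_k)` is nonincreasing and, being
nonnegative, convergent; its consecutive differences therefore tend to `0`, and the bound
`2μλ b_k² ≤ a_0 (a_{k-1} - a_k)` forces `b_k → 0`. Then (ii) squeezes `a_k` to `0`.
-/

lemma two_mul_mul_sq_le_mul_sub_of_le_div {lam μ x y z : ℝ} (hlam : 0 < lam)
    (h : 2 * μ * z ^ 2 + y ^ 2 / lam ≤ x * y / lam) :
    2 * μ * lam * z ^ 2 ≤ y * (x - y) := by
  have h' := mul_le_mul_of_nonneg_right h hlam.le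
  rw [add_mul, div_mul_cancel₀ _ hlam.ne', div_mul_cancel₀ _ hlam.ne'] at h'
  linarith

lemma le_of_mul_sub_nonneg {x y : ℝ} (hx : 0 ≤ x) (h : 0 ≤ y * (x - y)) :
    y ≤ x := by
  by_contra! hxy
  nlinarith [mul_pos (hx.trans_lt hxy) (sub_pos.2 hxy)]

lemma Antitone.tendsto_sub_succ_zero {a : ℕ → ℝ} (hanti : Antitone a)
    (hbdd : BddBelow (Set.range a)) :
    Tendsto (fun k => a k - a (k + 1)) atTop (𝓝 0) := by
  have hlim := tendsto_atTop_ciInf hanti hbdd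
  simpa using hlim.sub ((tendsto_add_atTop_iff_nat 1).2 hlim)

lemma tendsto_zero_of_sq_tendsto_zero {u : ℕ → ℝ} (h : Tendsto (fun k => u k ^ 2) atTop (𝓝 0)) :
    Tendsto u atTop (𝓝 0) := by
  rw [tendsto_zero_iff_abs_tendsto_zero]
  simpa [Function.comp_def, Real.sqrt_sq_eq_abs] using h.sqrt

theorem degenerate_storage_convergence_general
    (lam μ C : ℝ) (hlam : 0 < lam) (hμ : 0 < μ)
    (a b : ℕ → ℝ) (ha : ∀ k, 0 ≤ a k)
    (h1 : ∀ k, 1 ≤ k →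
      2 * μ * (b k) ^ 2 + (a k) ^ 2 / lam ≤ (a (k - 1) * a k) / lam)
    (h2 : ∀ k, 1 ≤ k → a k ≤ C * b k) :
    Tendsto a atTop (𝓝 0) ∧ Tendsto b atTop (𝓝 0) ∧
      (∀ k, 1 ≤ k → a k ≤ a (k - 1)) := by
  have hc : 0 < 2 * μ * lam := by positivity
  have hstep (k : ℕ) : 2 * μ * lam * b (k + 1) ^ 2 ≤ a (k + 1) * (a k - a (k + 1)) :=
    two_mul_mul_sq_le_mul_sub_of_le_div hlam (h1 (k + 1) le_add_self)
  have hanti : Antitone a := antitone_nat_of_succ_le fun k =>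
    le_of_mul_sub_nonneg (ha k) ((by positivity : (0 : ℝ) ≤ _).trans (hstep k))
  have hb_sq (k : ℕ) : b (k + 1) ^ 2 ≤ a 0 * (a k - a (k + 1)) / (2 * μ * lam) := by
    rw [le_div_iff₀ hc, mul_comm]
    exact (hstep k).trans (mul_le_mul_of_nonneg_right (hanti (Nat.zero_le _))
      (sub_nonneg.2 (hanti k.le_succ)))
  have hdiff := hanti.tendsto_sub_succ_zero ⟨0, Set.forall_mem_range.2 ha⟩
  have hb_lim : Tendsto b atTop (𝓝 0) := by
    refine (tendsto_add_atTop_iff_nat 1).1 (tendsto_zero_of_sq_tendsto_zero ?_)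
    refine squeeze_zero (fun k => sq_nonneg _) hb_sq ?_
    simpa using (hdiff.const_mul (a 0)).div_const (2 * μ * lam)
  have ha_lim : Tendsto a atTop (𝓝 0) := by
    refine squeeze_zero' (Eventually.of_forall ha) ?_ (by simpa using hb_lim.const_mul C)
    filter_upwards [eventually_ge_atTop 1] with k hk using h2 k hk
  exact ⟨ha_lim, hb_lim, fun k _ => hanti (Nat.sub_le k 1)⟩

/-- Abstract content of Remark 4.1 of the paper (degenerate case
`min_i c_i = 0`): if nonnegative sequences `a`, `b` satisfy
`2μ b_k² + a_k²/λ ≤ (a_{k−1} a_k)/λ` and `a_k ≤ C b_k` for all `k ≥ 1`,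
then `a_k → 0` and `b_k → 0`; in particular `(a_k)` is nonincreasing. -/
theorem degenerate_storage_convergence
    (lam μ C : ℝ) (hlam : 0 < lam) (hμ : 0 < μ) (hC : 0 < C)
    (a b : ℕ → ℝ) (ha : ∀ k, 0 ≤ a k) (hb : ∀ k, 0 ≤ b k)
    (h1 : ∀ k, 1 ≤ k →
      2 * μ * (b k) ^ 2 + (a k) ^ 2 / lam ≤ (a (k - 1) * a k) / lam)
    (h2 : ∀ k, 1 ≤ k → a k ≤ C * b k) :
    Tendsto a atTop (𝓝 0) ∧ Tendsto b atTop (𝓝 0) ∧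
      (∀ k, 1 ≤ k → a k ≤ a (k - 1)) :=
  degenerate_storage_convergence_general lam μ C hlam hμ a b ha h1 h2
end
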